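/- There exists a computably enumerable set A ⊆ ℕ whose complement ℕ \ A is hyperimmune (in particular, a hypersimple set exists). -/

import Mathlib

/-- Partial functions `ℕ →. ℕ` computable relative to an oracle `O : ℕ →. ℕ`
(the oracle analogue of `Nat.Partrec`). -/
inductive RecursiveIn' (O : ℕ →. ℕ) : (ℕ →. ℕ) → Prop
  | oracle : RecursiveIn' O O
  | zero : RecursiveIn' O (pure 0)
  | succ : RecursiveIn' O ↑Nat.succ
  | left : RecursiveIn' O ↑fun n : ℕ => n.unpair.1
  | right : RecursiveIn' O ↑fun n : ℕ => n.unpair.2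
  | pair {f g : ℕ →. ℕ} : RecursiveIn' O f → RecursiveIn' O g →
      RecursiveIn' O fun n => Nat.pair <$> f n <*> g n
  | comp {f g : ℕ →. ℕ} : RecursiveIn' O f → RecursiveIn' O g →
      RecursiveIn' O fun n => g n >>= f
  | prec {f g : ℕ →. ℕ} : RecursiveIn' O f → RecursiveIn' O g →
      RecursiveIn' O (Nat.unpaired fun a n =>
        n.rec (f a) fun y IH => do let i ← IH; g (Nat.pair a (Nat.pair y i)))
  | rfind {f : ℕ →. ℕ} : RecursiveIn' O f →
      RecursiveIn' O fun a => Nat.rfind fun n => (fun m => m = 0) <$> f (Nat.pair a n)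

open Classical in
/-- The characteristic function of a set of naturals, as a partial function. -/
noncomputable def Set.chi (A : Set ℕ) : ℕ →. ℕ :=
  fun n => Part.some (if n ∈ A then 1 else 0)

/-- Turing reducibility for sets of naturals. -/
def TRed (A B : Set ℕ) : Prop := RecursiveIn' B.chi A.chi

/-- Turing incomparability. -/
def TIncomp (A B : Set ℕ) : Prop := ¬ TRed A B ∧ ¬ TRed B A

/-- A set is computably enumerable if it is the domain of a partial computable function. -/
def CE (A : Set ℕ) : Prop := ∃ f : ℕ →. ℕ, Partrec f ∧ ∀ n, n ∈ A ↔ (f n).Dom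

/-- Two sets are recursively inseparable if no computable set separates them. -/
def RecInsep (A B : Set ℕ) : Prop :=
  ¬ ∃ D : Set ℕ, ComputablePred (· ∈ D) ∧ A ⊆ D ∧ B ∩ D = ∅

/-- `D` is a separator for the pair `⟨A, B⟩`. -/
def Separator (A B D : Set ℕ) : Prop := A ⊆ D ∧ B ∩ D = ∅

/-- The halting problem `∅′`. -/
def haltingSet : Set ℕ :=
  {e | ((Denumerable.ofNat Nat.Partrec.Code e).eval e).Dom}

/-- The canonical finite set with index `n` (canonical bijective coding of finite sets). -/
def Dfin (n : ℕ) : Finset ℕ := Denumerable.ofNat (Finset ℕ) n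

/-- A set is hyperimmune if it is infinite and there is no computable `f` producing
pairwise disjoint canonical finite sets each meeting the set. -/
def Hyperimmune (B : Set ℕ) : Prop :=
  B.Infinite ∧ ¬ ∃ f : ℕ → ℕ, Computable f ∧
    (∀ m n, m ≠ n → Disjoint (Dfin (f m)) (Dfin (f n))) ∧
    ∀ n, ∃ x ∈ Dfin (f n), x ∈ B

/-!
Dekker's deficiency set. Let `k` be an injective computable enumeration of a noncomputable set
`K` (here: the halting set, coded by odd numbers). Call a stage `n` deficient if `k` later takes a
smaller value; the deficient stages form a c.e. set `A`. If a computable disjoint array of finite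
sets all met the non-deficient stages, then given `x`, one of the first `x + 2` sets would contain
a non-deficient stage `b` with `x < k b`, so `x ∈ K` iff `x = k j` for some `j ≤ b`. As `b` is
bounded by the canonical index of its set, this would decide `K`.
-/

open Encodable Denumerable

theorem lt_add_encode_of_mem_raise' :
    ∀ {l : List ℕ} {n x : ℕ}, x ∈ raise' l n → x < n + encode l
  | [], _, _, hx => by simp [raise'] at hx
  | m :: l, n, x, hx => by
    have hpair := Nat.add_le_pair m (encode l)
    rw [encode_list_cons]
    rcases List.mem_cons.1 hx with rfl | hx
    · change m + n < n + (Nat.pair m (encode l) + 1)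
      omega
    · have := lt_add_encode_of_mem_raise' hx
      change x < n + (Nat.pair m (encode l) + 1)
      omega

theorem lt_of_mem_Dfin {x n : ℕ} (hx : x ∈ Dfin n) : x < n := by
  have hmem : x ∈ raise' (ofNat (List ℕ) n) 0 := by
    have hD : Dfin n = (raise'Finset (ofNat (List ℕ) n) 0).map (eqv ℕ).symm.toEmbedding := rfl
    rw [hD, Finset.mem_map] at hx
    obtain ⟨y, hy, rfl⟩ := hx
    exact hy
  simpa using lt_add_encode_of_mem_raise' hmem

theorem ComputablePred.exists_lt {α : Type*} [Primcodable α] {p : α → ℕ → Prop} {n : α → ℕ}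
    (hp : ComputablePred fun q : α × ℕ => p q.1 q.2) (hn : Computable n) :
    ComputablePred fun a => ∃ j < n a, p a j := by
  classical
  have hfind : ∀ a, ∃ j, p a j ∨ n a ≤ j := fun a => ⟨n a, Or.inr le_rfl⟩
  have hsearch : Computable fun a => Nat.find (hfind a) := by
    refine Computable.find (Computable.computablePred ?_) hfind
    exact (Primrec.or.to_comp.comp hp.decide
      ((PrimrecRel.decide Primrec.nat_le).to_comp.comp (hn.comp .fst) .snd)).of_eq
      fun q => by simp
  refine (Computable.computablePred
    ((PrimrecRel.decide Primrec.nat_lt).to_comp.comp hsearch hn)).of_eq fun a => ?_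
  constructor
  · intro h
    rcases Nat.find_spec (hfind a) with hp | hle
    · exact ⟨_, h, hp⟩
    · exact absurd h (not_lt.2 hle)
  · rintro ⟨j, hj, hpj⟩
    exact (Nat.find_min' (hfind a) (Or.inl hpj)).trans_lt hj

section Deficiency

variable (k : ℕ → ℕ)

def deficiencySet : Set ℕ := {n | ∃ m, n < m ∧ k m < k n}

variable {k}

theorem mem_compl_deficiencySet {n : ℕ} : n ∈ (deficiencySet k)ᶜ ↔ ∀ m, n < m → k n ≤ k m := by
  simp [deficiencySet]

theorem ce_deficiencySet (hk : Computable k) : CE (deficiencySet k) := by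
  have hdec : ComputablePred fun q : ℕ × ℕ => q.1 < q.2 ∧ k q.2 < k q.1 :=
    Computable.computablePred <| (Primrec.and.to_comp.comp
      ((PrimrecRel.decide Primrec.nat_lt).to_comp.comp .fst .snd)
      ((PrimrecRel.decide Primrec.nat_lt).to_comp.comp (hk.comp .snd) (hk.comp .fst))).of_eq
      fun q => by simp
  refine ⟨fun n => Nat.rfind fun m => Part.some (decide (n < m ∧ k m < k n)),
    Partrec.rfind (Computable₂.partrec₂ hdec.decide), fun n => ?_⟩
  refine Iff.trans ?_ Nat.rfind_dom.symm
  simp [deficiencySet]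

variable (k) in
theorem infinite_compl_deficiencySet : (deficiencySet k)ᶜ.Infinite := by
  refine Set.infinite_of_forall_exists_gt fun N => ?_
  obtain ⟨m, hNm, hmin⟩ :=
    (InvImage.wf k wellFounded_lt).has_min (Set.Ioi N) ⟨N + 1, N.lt_succ_self⟩
  refine ⟨m, mem_compl_deficiencySet.2 fun m' hm' => ?_, hNm⟩
  exact not_lt.1 (hmin m' (lt_trans (Set.mem_Ioi.1 hNm) hm'))

theorem mem_range_iff_of_mem_compl_deficiencySet {b x : ℕ} (hb : b ∈ (deficiencySet k)ᶜ)
    (hx : x < k b) : x ∈ Set.range k ↔ ∃ j < b + 1, k j = x := by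
  refine ⟨fun ⟨j, hj⟩ => ⟨j, Nat.lt_succ_of_le (not_lt.1 fun hbj => ?_), hj⟩,
    fun ⟨j, _, hj⟩ => ⟨j, hj⟩⟩
  have := mem_compl_deficiencySet.1 hb j hbj
  omega

theorem exists_lt_apply_of_injective {g : ℕ → ℕ} (hg : Function.Injective g) (x : ℕ) :
    ∃ i < x + 2, x < g i := by
  by_contra! h
  have := Finset.card_le_card_of_injOn g (s := Finset.range (x + 2)) (t := Finset.range (x + 1))
    (fun i hi => by simpa [Nat.lt_succ_iff] using h i (by simpa using hi)) hg.injOn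
  simp at this

theorem exists_mem_Dfin_lt_apply (hinj : Function.Injective k) {B : Set ℕ} {f : ℕ → ℕ}
    (hdisj : ∀ m n, m ≠ n → Disjoint (Dfin (f m)) (Dfin (f n)))
    (hmeet : ∀ n, ∃ y ∈ Dfin (f n), y ∈ B) (x : ℕ) :
    ∃ i < x + 2, ∃ b ∈ Dfin (f i), b ∈ B ∧ x < k b := by
  choose b hbD hbB using hmeet
  have hb : Function.Injective b := fun i j hij => by
    by_contra hne
    exact Finset.disjoint_left.1 (hdisj i j hne) (hbD i) (hij ▸ hbD j)
  obtain ⟨i, hi, hx⟩ := exists_lt_apply_of_injective (hinj.comp hb) x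
  exact ⟨i, hi, b i, hbD i, hbB i, hx⟩

theorem hyperimmune_compl_deficiencySet (hk : Computable k) (hinj : Function.Injective k)
    (hrange : ¬ComputablePred (· ∈ Set.range k)) : Hyperimmune (deficiencySet k)ᶜ := by
  refine ⟨infinite_compl_deficiencySet k, fun ⟨f, hf, hdisj, hmeet⟩ => hrange ?_⟩
  have hbound : ∀ x, x ∈ Set.range k ↔ ∃ i < x + 2, ∃ j < f i + 1, k j = x := fun x => by
    refine ⟨fun hx => ?_, fun ⟨i, _, j, _, hj⟩ => ⟨j, hj⟩⟩
    obtain ⟨i, hi, b, hbD, hbA, hxb⟩ := exists_mem_Dfin_lt_apply hinj hdisj hmeet x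
    obtain ⟨j, hjb, hj⟩ := (mem_range_iff_of_mem_compl_deficiencySet hbA hxb).1 hx
    exact ⟨i, hi, j, by have := lt_of_mem_Dfin hbD; omega, hj⟩
  have hgraph : ComputablePred fun q : (ℕ × ℕ) × ℕ => k q.2 = q.1.1 :=
    Computable.computablePred <|
      (PrimrecRel.decide Primrec.eq).to_comp.comp (hk.comp .snd) (Computable.fst.comp .fst)
  refine (ComputablePred.exists_lt (ComputablePred.exists_lt hgraph ?_) ?_).of_eq
    fun x => (hbound x).symm
  · exact Computable.succ.comp (hf.comp .snd)
  · exact Computable.succ.comp Computable.succ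

end Deficiency

open Nat.Partrec (Code)

def haltsAt (e s : ℕ) : Bool := ((ofNat Code e).evaln s 0).isSome

def FirstHaltsAt (e s : ℕ) : Prop := haltsAt e s ∧ ∀ t < s, haltsAt e t = false

instance : DecidableRel FirstHaltsAt := fun _ _ => inferInstanceAs (Decidable (_ ∧ _))

theorem haltsAt_primrec : Primrec₂ haltsAt :=
  Primrec.option_isSome.comp <| Code.primrec_evaln.comp <|
    (Primrec.snd.pair ((Primrec.ofNat Code).comp .fst)).pair (Primrec.const 0)

theorem firstHaltsAt_primrecRel : PrimrecRel FirstHaltsAt := by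
  have hhalts : PrimrecRel fun e s => haltsAt e s = true :=
    Primrec.eq.comp haltsAt_primrec (Primrec.const true)
  have hnot : PrimrecRel fun t e => haltsAt e t = false :=
    Primrec.eq.comp (haltsAt_primrec.comp .snd .fst) (Primrec.const false)
  exact hhalts.and ((PrimrecRel.forall_lt hnot).comp .snd .fst)

theorem FirstHaltsAt.unique {e s s' : ℕ} (h : FirstHaltsAt e s) (h' : FirstHaltsAt e s') :
    s = s' := by
  by_contra hne
  rcases Nat.lt_or_gt_of_ne hne with hlt | hlt
  · simpa [h.1] using h'.2 s hlt
  · simpa [h'.1] using h.2 s' hlt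

theorem exists_firstHaltsAt_iff {e : ℕ} :
    (∃ s, FirstHaltsAt e s) ↔ ((ofNat Code e).eval 0).Dom := by
  classical
  have hhalts : (∃ s, haltsAt e s) ↔ ((ofNat Code e).eval 0).Dom := by
    simp only [haltsAt, Option.isSome_iff_exists, Part.dom_iff_mem, Code.evaln_complete]
    exact exists_comm
  rw [← hhalts]
  refine ⟨fun ⟨s, hs⟩ => ⟨s, hs.1⟩, fun h => ⟨Nat.find h, Nat.find_spec h, fun t ht => ?_⟩⟩
  simpa using Nat.find_min h ht

-- Odd values `2e + 1` code the halting set; listing `e` only at its first halting stage keeps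
-- the enumeration injective, and the even values `2p` make it total.
def haltingEnum (p : ℕ) : ℕ :=
  if FirstHaltsAt p.unpair.1 p.unpair.2 then 2 * p.unpair.1 + 1 else 2 * p

theorem haltingEnum_computable : Computable haltingEnum :=
  (Primrec.ite (firstHaltsAt_primrecRel.comp (Primrec.fst.comp .unpair) (Primrec.snd.comp .unpair))
    (Primrec.nat_add.comp (Primrec.nat_mul.comp (Primrec.const 2) (Primrec.fst.comp .unpair))
      (Primrec.const 1))
    (Primrec.nat_mul.comp (Primrec.const 2) .id)).to_comp

theorem haltingEnum_injective : Function.Injective haltingEnum := by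
  intro p q hpq
  unfold haltingEnum at hpq
  split_ifs at hpq with hp hq hq
  · have he : p.unpair.1 = q.unpair.1 := by omega
    rw [he] at hp
    rw [← Nat.pair_unpair p, ← Nat.pair_unpair q, he, hp.unique hq]
  all_goals omega

theorem odd_mem_range_haltingEnum_iff {e : ℕ} :
    2 * e + 1 ∈ Set.range haltingEnum ↔ ((ofNat Code e).eval 0).Dom := by
  rw [← exists_firstHaltsAt_iff]
  constructor
  · rintro ⟨p, hp⟩
    unfold haltingEnum at hp
    split_ifs at hp with h
    · exact ⟨p.unpair.2, by rwa [show e = p.unpair.1 by omega]⟩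
    · omega
  · rintro ⟨s, hs⟩
    exact ⟨Nat.pair e s, by simp [haltingEnum, hs]⟩

theorem not_computablePred_mem_range_haltingEnum :
    ¬ComputablePred (· ∈ Set.range haltingEnum) := by
  classical
  intro hrange
  refine ComputablePred.halting_problem 0 <| Computable.computablePred
    ((hrange.decide.comp (Computable.succ.comp
      (Primrec.nat_mul.to_comp.comp (Computable.const 2) Computable.encode))).of_eq fun c => ?_)
  simp only [Nat.succ_eq_add_one, odd_mem_range_haltingEnum_iff, ofNat_encode]

theorem stmt17 : ∃ A : Set ℕ, CE A ∧ Hyperimmune Aᶜ :=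
  ⟨deficiencySet haltingEnum, ce_deficiencySet haltingEnum_computable,
    hyperimmune_compl_deficiencySet haltingEnum_computable haltingEnum_injective
      not_computablePred_mem_range_haltingEnum⟩
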